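/- Let n ∈ ℕ with n > 1, let 0 ≤ γ ≤ 1/2 and 0 ≤ λ ≤ (n−1)/2 with (γ,λ) ≠ (0,0), and let SV_{n,γ,λ} : ℝ² → ℝ² be the map SV_{n,γ,λ}(x,y) = ( x(γx+λy), x( ((1−2γ)/(n−1)) x + (1 − 2λ/(n−1)) y ) ). Then: (i) if λ = 0 (so γ ≠ 0), the only non-zero fixed point of SV_{n,γ,λ} is ( 1/γ, (1−2γ)/(γ(γ−1)(n−1)) ); (ii)(a) if λ ≠ 0 and λ = (n−1)γ, the only non-zero fixed point is ( 1/(1−γ), (1−2γ)/(γ(1−γ)(n−1)) ); (ii)(b) if λ ≠ 0 and λ ≠ (n−1)γ, then for every x ∈ ℝ, the point (x, (1−γx)/λ) is a fixed point of SV_{n,γ,λ} if and only if (λ−(n−1)γ) x² + ((n−1)(γ+1)−2λ) x − (n−1) = 0, and every non-zero fixed point is of this form; in particular there are at most two non-zero fixed points, and the discriminant ((n−1)γ−2λ)² + (n−1)²(1−2γ) is nonnegative. -/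

import Mathlib

/-- The simplified gonosomal dynamical system `SV_{n,γ,λ}`. -/
noncomputable def svOp (n : ℕ) (γ l : ℝ) (p : ℝ × ℝ) : ℝ × ℝ :=
  (p.1 * (γ * p.1 + l * p.2),
   p.1 * (((1 - 2 * γ) / ((n : ℝ) - 1)) * p.1 + (1 - 2 * l / ((n : ℝ) - 1)) * p.2))

/-!
Both coordinates of `SV(x, y)` carry the factor `x`, so a non-zero fixed point has
`x ≠ 0`, and cancelling `x` in the first coordinate gives the line `γx + λy = 1`. For `λ = 0`
this fixes `x = 1/γ`, and the second coordinate is then linear in `y`. For `λ ≠ 0` we substitute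
`y = (1 - γx)/λ` into the second coordinate; after clearing the denominator `(n-1)λ` it becomes a
polynomial equation in `x` of degree at most two, which degenerates to a linear one exactly when
`λ = (n-1)γ`.
-/

theorem exists_pair_of_quadratic_eq_zero {K : Type*} [Field K] {A B C : K} (hA : A ≠ 0) :
    ∃ r s : K, ∀ x, A * x ^ 2 + B * x + C = 0 → x = r ∨ x = s := by
  by_cases hroot : ∃ r, A * r ^ 2 + B * r + C = 0
  · obtain ⟨r, hr⟩ := hroot
    refine ⟨r, -B / A - r, fun x hx => ?_⟩
    have hfactor : (x - r) * (A * (x - (-B / A - r))) = 0 := by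
      field_simp
      linear_combination hx - hr
    rcases mul_eq_zero.1 hfactor with h | h
    · exact Or.inl (sub_eq_zero.1 h)
    · exact Or.inr (sub_eq_zero.1 ((mul_eq_zero.1 h).resolve_left hA))
  · push Not at hroot
    exact ⟨0, 0, fun x hx => absurd hx (hroot x)⟩

section

variable {n : ℕ} {γ l : ℝ}

/-- Clearing the denominator `(n-1)λ` in the second coordinate of `SV(x, (1 - γx)/λ) = (x, _)`
gives `svQuad n γ l x = 0`. -/
def svQuad (n : ℕ) (γ l x : ℝ) : ℝ :=
  (l - ((n : ℝ) - 1) * γ) * x ^ 2 + (((n : ℝ) - 1) * (γ + 1) - 2 * l) * x - ((n : ℝ) - 1)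

theorem svOp_eq_zero_of_fst_eq_zero {p : ℝ × ℝ} (h : p.1 = 0) : svOp n γ l p = 0 := by
  simp [svOp, h]

theorem fst_ne_zero_of_svOp_eq_self {p : ℝ × ℝ} (hfix : svOp n γ l p = p) (hp : p ≠ 0) :
    p.1 ≠ 0 :=
  fun h => hp (hfix ▸ svOp_eq_zero_of_fst_eq_zero h)

theorem line_of_svOp_eq_self {p : ℝ × ℝ} (hfix : svOp n γ l p = p) (hp : p ≠ 0) :
    γ * p.1 + l * p.2 = 1 := by
  have hfst : p.1 * (γ * p.1 + l * p.2) = p.1 * 1 := by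
    rw [mul_one]; exact congrArg Prod.fst hfix
  exact mul_left_cancel₀ (fst_ne_zero_of_svOp_eq_self hfix hp) hfst

theorem svOp_eq_self_and_ne_zero_iff_of_l_eq_zero (hN : (n : ℝ) - 1 ≠ 0) (hγ : γ ≠ 0)
    (hγ1 : γ ≠ 1) {p : ℝ × ℝ} :
    svOp n γ 0 p = p ∧ p ≠ 0 ↔
      p = (1 / γ, (1 - 2 * γ) / (γ * (γ - 1) * ((n : ℝ) - 1))) := by
  have hγ1' : γ - 1 ≠ 0 := sub_ne_zero.2 hγ1
  obtain ⟨x, y⟩ := p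
  constructor
  · rintro ⟨hfix, hp⟩
    have hx : γ * x = 1 := by simpa using line_of_svOp_eq_self hfix hp
    have hsnd := congrArg Prod.snd hfix
    simp only [svOp, mul_zero, zero_div, sub_zero] at hsnd
    have hxv : x = 1 / γ := by field_simp; linarith
    subst hxv
    refine Prod.ext rfl ?_
    rw [eq_div_iff (mul_ne_zero (mul_ne_zero hγ hγ1') hN)]
    field_simp at hsnd
    linear_combination -hsnd
  · rintro ⟨⟩
    refine ⟨Prod.ext ?_ ?_, fun h => one_div_ne_zero hγ (congrArg Prod.fst h)⟩
    all_goals simp only [svOp]; field_simp; ring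

theorem svOp_mk_line_eq_self_iff (hN : (n : ℝ) - 1 ≠ 0) (hl : l ≠ 0) (x : ℝ) :
    svOp n γ l (x, (1 - γ * x) / l) = (x, (1 - γ * x) / l) ↔ svQuad n γ l x = 0 := by
  have hsnd : ((n : ℝ) - 1) * l *
      (x * ((1 - 2 * γ) / ((n : ℝ) - 1) * x + (1 - 2 * l / ((n : ℝ) - 1)) * ((1 - γ * x) / l))
        - (1 - γ * x) / l) = svQuad n γ l x := by
    unfold svQuad; field_simp; ring
  have hfst : x * (γ * x + l * ((1 - γ * x) / l)) = x := by field_simp; ring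
  simp only [svOp, Prod.mk.injEq, hfst, true_and, ← hsnd, mul_eq_zero, hN, hl, false_or,
    sub_eq_zero]

theorem svOp_eq_self_and_ne_zero_iff (hN : (n : ℝ) - 1 ≠ 0) (hl : l ≠ 0) {p : ℝ × ℝ} :
    svOp n γ l p = p ∧ p ≠ 0 ↔ p.2 = (1 - γ * p.1) / l ∧ svQuad n γ l p.1 = 0 := by
  obtain ⟨x, y⟩ := p
  constructor
  · rintro ⟨hfix, hp⟩
    have hy : y = (1 - γ * x) / l := by
      rw [eq_div_iff hl]; linear_combination line_of_svOp_eq_self hfix hp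
    subst hy
    exact ⟨rfl, (svOp_mk_line_eq_self_iff hN hl x).1 hfix⟩
  · rintro ⟨hy, hq⟩
    dsimp only at hy hq
    subst hy
    refine ⟨(svOp_mk_line_eq_self_iff hN hl x).2 hq, fun h => ?_⟩
    have hx : x = 0 := congrArg Prod.fst h
    rw [svQuad, hx] at hq
    exact hN (by linear_combination -hq)

theorem svQuad_of_l_eq (x : ℝ) :
    svQuad n γ (((n : ℝ) - 1) * γ) x = ((n : ℝ) - 1) * ((1 - γ) * x - 1) := by
  unfold svQuad; ring

theorem svOp_eq_self_and_ne_zero_iff_of_l_eq (hN : (n : ℝ) - 1 ≠ 0) (hγ : γ ≠ 0) (hγ1 : γ ≠ 1)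
    {p : ℝ × ℝ} :
    svOp n γ (((n : ℝ) - 1) * γ) p = p ∧ p ≠ 0 ↔
      p = (1 / (1 - γ), (1 - 2 * γ) / (γ * (1 - γ) * ((n : ℝ) - 1))) := by
  have h1γ : 1 - γ ≠ 0 := sub_ne_zero.2 hγ1.symm
  have hx : ∀ x : ℝ, (n - 1 : ℝ) * ((1 - γ) * x - 1) = 0 ↔ x = 1 / (1 - γ) := fun x => by
    rw [mul_eq_zero, or_iff_right hN, sub_eq_zero, eq_div_iff h1γ, mul_comm]
  rw [svOp_eq_self_and_ne_zero_iff hN (mul_ne_zero hN hγ), svQuad_of_l_eq, hx, Prod.ext_iff,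
    and_comm]
  refine and_congr_right fun hx1 => ?_
  rw [hx1]
  constructor <;> intro h <;> rw [h] <;> field_simp <;> ring

theorem exists_svOp_fixed_subset_pair (hN : (n : ℝ) - 1 ≠ 0) (hl : l ≠ 0)
    (hlγ : l ≠ ((n : ℝ) - 1) * γ) :
    ∃ a b : ℝ × ℝ, {p : ℝ × ℝ | svOp n γ l p = p ∧ p ≠ 0} ⊆ {a, b} := by
  obtain ⟨r, s, hrs⟩ := exists_pair_of_quadratic_eq_zero
    (B := ((n : ℝ) - 1) * (γ + 1) - 2 * l) (C := -((n : ℝ) - 1)) (sub_ne_zero.2 hlγ)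
  refine ⟨(r, (1 - γ * r) / l), (s, (1 - γ * s) / l), fun p hp => ?_⟩
  obtain ⟨hy, hq⟩ := (svOp_eq_self_and_ne_zero_iff hN hl).1 hp
  rw [svQuad, sub_eq_add_neg] at hq
  rcases hrs p.1 hq with h | h
  · exact Or.inl (Prod.ext h (by rw [hy, h]))
  · exact Or.inr (Prod.ext h (by rw [hy, h]))

end

theorem svOp_fixed_points_general (n : ℕ) (hn : 1 < n) (γ l : ℝ)
    (hγ1 : γ ≤ 1 / 2)
    (hne : (γ, l) ≠ (0, 0)) :
    (l = 0 →
      {p : ℝ × ℝ | svOp n γ l p = p ∧ p ≠ 0} =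
        {(1 / γ, (1 - 2 * γ) / (γ * (γ - 1) * ((n : ℝ) - 1)))}) ∧
    (l ≠ 0 → l = ((n : ℝ) - 1) * γ →
      {p : ℝ × ℝ | svOp n γ l p = p ∧ p ≠ 0} =
        {(1 / (1 - γ), (1 - 2 * γ) / (γ * (1 - γ) * ((n : ℝ) - 1)))}) ∧
    (l ≠ 0 → l ≠ ((n : ℝ) - 1) * γ →
      (∀ x : ℝ,
        svOp n γ l (x, (1 - γ * x) / l) = (x, (1 - γ * x) / l) ↔
          (l - ((n : ℝ) - 1) * γ) * x ^ 2 + (((n : ℝ) - 1) * (γ + 1) - 2 * l) * x -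
              ((n : ℝ) - 1) = 0) ∧
      (∀ p : ℝ × ℝ, svOp n γ l p = p → p ≠ 0 → p.2 = (1 - γ * p.1) / l) ∧
      (∃ a b : ℝ × ℝ, {p : ℝ × ℝ | svOp n γ l p = p ∧ p ≠ 0} ⊆ {a, b}) ∧
      0 ≤ (((n : ℝ) - 1) * γ - 2 * l) ^ 2 + ((n : ℝ) - 1) ^ 2 * (1 - 2 * γ)) := by
  have hN : (n : ℝ) - 1 ≠ 0 := sub_ne_zero.2 (by exact_mod_cast hn.ne')
  have hγ1' : γ ≠ 1 := by linarith
  refine ⟨fun hl => ?_, fun hl hlγ => ?_, fun hl hlγ => ⟨svOp_mk_line_eq_self_iff hN hl,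
    fun p hfix hp => ((svOp_eq_self_and_ne_zero_iff hN hl).1 ⟨hfix, hp⟩).1,
    exists_svOp_fixed_subset_pair hN hl hlγ, by nlinarith [sq_nonneg ((n : ℝ) - 1)]⟩⟩
  · subst hl
    have hγ : γ ≠ 0 := by rintro rfl; exact hne rfl
    ext p
    exact svOp_eq_self_and_ne_zero_iff_of_l_eq_zero hN hγ hγ1'
  · have hγ : γ ≠ 0 := by rintro rfl; simp [hlγ] at hl
    subst hlγ
    ext p
    exact svOp_eq_self_and_ne_zero_iff_of_l_eq hN hγ hγ1'

theorem svOp_fixed_points (n : ℕ) (hn : 1 < n) (γ l : ℝ)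
    (hγ0 : 0 ≤ γ) (hγ1 : γ ≤ 1 / 2) (hl0 : 0 ≤ l) (hl1 : l ≤ ((n : ℝ) - 1) / 2)
    (hne : (γ, l) ≠ (0, 0)) :
    (l = 0 →
      {p : ℝ × ℝ | svOp n γ l p = p ∧ p ≠ 0} =
        {(1 / γ, (1 - 2 * γ) / (γ * (γ - 1) * ((n : ℝ) - 1)))}) ∧
    (l ≠ 0 → l = ((n : ℝ) - 1) * γ →
      {p : ℝ × ℝ | svOp n γ l p = p ∧ p ≠ 0} =
        {(1 / (1 - γ), (1 - 2 * γ) / (γ * (1 - γ) * ((n : ℝ) - 1)))}) ∧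
    (l ≠ 0 → l ≠ ((n : ℝ) - 1) * γ →
      (∀ x : ℝ,
        svOp n γ l (x, (1 - γ * x) / l) = (x, (1 - γ * x) / l) ↔
          (l - ((n : ℝ) - 1) * γ) * x ^ 2 + (((n : ℝ) - 1) * (γ + 1) - 2 * l) * x -
              ((n : ℝ) - 1) = 0) ∧
      (∀ p : ℝ × ℝ, svOp n γ l p = p → p ≠ 0 → p.2 = (1 - γ * p.1) / l) ∧
      (∃ a b : ℝ × ℝ, {p : ℝ × ℝ | svOp n γ l p = p ∧ p ≠ 0} ⊆ {a, b}) ∧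
      0 ≤ (((n : ℝ) - 1) * γ - 2 * l) ^ 2 + ((n : ℝ) - 1) ^ 2 * (1 - 2 * γ)) :=
  svOp_fixed_points_general n hn γ l hγ1 hne
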